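/- Robustness to misspecified propensities: if the outcome regression and the sequential regression are correct, i.e. b̂(m, w) = b(m, w) for all m ∈ 𝕄, w ∈ 𝕎 and ξ̂(w) = ξ(w) for all w ∈ 𝕎, then for arbitrary π̂₀, π̂₁ : 𝕎 → (0, 1) and π̂ᴹ₀, π̂ᴹ₁ : 𝕄 × 𝕎 → (0, 1) the AIPW functional is exactly unbiased: Ψ(π̂, b̂, ξ̂) = ψ. (Population version of Corollary 1, case (iii).) -/

import Mathlib

open MeasureTheory ProbabilityTheory

/-!
Once the outcome and sequential regressions are correct, the AIPW integrand is `ξ(W)` plus two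
residual terms: a weight depending on `(A, M, W)` times `Y - b(M, W)`, vanishing off `A = a`, and a
weight depending on `(A, W)` times `b(M, W) - ξ(W)`, vanishing off `A = a'`. On each cell of the
conditioning variable the weight is constant and the residual has conditional mean zero, so both
terms integrate to zero whatever the weights are; the propensity models enter only through these
weights. What remains is `E[ξ(W)] = ψ`.
-/

section FiniteConditioning

variable {Ω α : Type*} [MeasurableSpace Ω] {μ : Measure Ω}
  [Fintype α] [MeasurableSpace α] [DiscreteMeasurableSpace α] {X : Ω → α}

theorem MeasureTheory.Integrable.comp_fintype_mul {Z : Ω → ℝ} (hZ : Integrable Z μ)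
    (hX : Measurable X) (g : α → ℝ) : Integrable (fun ω => g (X ω) * Z ω) μ :=
  hZ.bdd_mul (c := ∑ x, ‖g x‖) (Measurable.of_discrete.comp hX).aestronglyMeasurable
    (ae_of_all _ fun ω => Finset.single_le_sum (fun x _ => norm_nonneg (g x))
      (Finset.mem_univ (X ω)))

theorem integral_comp_eq_sum [IsFiniteMeasure μ] (hX : Measurable X) (f : α → ℝ) :
    ∫ ω, f (X ω) ∂μ = ∑ x, μ.real (X ⁻¹' {x}) * f x := by
  rw [← integral_map hX.aemeasurable (Measurable.of_discrete).aestronglyMeasurable,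
    integral_fintype Integrable.of_finite]
  simp only [map_measureReal_apply hX (.singleton _), smul_eq_mul]

theorem integral_cond_comp_fiber {β : Type*} [Fintype β] [MeasurableSpace β]
    [DiscreteMeasurableSpace β] {Z : Ω → β} (hX : Measurable X) (hZ : Measurable Z) (f : β → α → ℝ)
    (x : α) :
    ∫ ω, f (Z ω) (X ω) ∂μ[|X ← x] = ∑ z, (μ[|X ← x]).real (Z ⁻¹' {z}) * f z x := by
  rw [integral_congr_ae ((ae_cond_mem (hX (.singleton x))).mono
    fun ω (hω : X ω = x) => show f (Z ω) (X ω) = f (Z ω) x by rw [hω])]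
  exact integral_comp_eq_sum hZ (f · x)

variable [IsFiniteMeasure μ]

theorem integral_eq_sum_measureReal_smul_integral_cond {E : Type*} [NormedAddCommGroup E]
    [NormedSpace ℝ E] (hX : Measurable X) {f : Ω → E} (hf : Integrable f μ) :
    ∫ ω, f ω ∂μ = ∑ x, μ.real (X ⁻¹' {x}) • ∫ ω, f ω ∂μ[|X ← x] := by
  rw [← sum_meas_smul_cond_fiber hX μ, integrable_finsetSum_measure] at hf
  conv_lhs => rw [← sum_meas_smul_cond_fiber hX μ]
  rw [integral_finsetSum_measure hf]
  simp only [integral_smul_measure, measureReal_def]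

theorem integral_comp_mul_sub_eq_zero (hX : Measurable X) {Y : Ω → ℝ} (hY : Integrable Y μ)
    (g c : α → ℝ) (hc : ∀ x, g x ≠ 0 → c x = ∫ ω, Y ω ∂μ[|X ← x]) :
    ∫ ω, g (X ω) * (Y ω - c (X ω)) ∂μ = 0 := by
  have hint : Integrable (fun ω => g (X ω) * (Y ω - c (X ω))) μ :=
    (hY.sub ((Integrable.of_finite (f := c)).comp_measurable hX)).comp_fintype_mul hX g
  rw [integral_eq_sum_measureReal_smul_integral_cond hX hint]
  refine Finset.sum_eq_zero fun x _ => ?_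
  by_cases hx : μ (X ⁻¹' {x}) = 0
  · simp [measureReal_def, hx]
  have := cond_isProbabilityMeasure hx
  have hYx : Integrable Y μ[|X ← x] := hY.restrict.smul_measure (ENNReal.inv_ne_top.2 hx)
  have hfiber : ∫ ω, g (X ω) * (Y ω - c (X ω)) ∂μ[|X ← x]
      = g x * (∫ ω, Y ω ∂μ[|X ← x] - c x) := by
    rw [integral_congr_ae ((ae_cond_mem (hX (.singleton x))).mono
      fun ω (hω : X ω = x) => show _ = g x * (Y ω - c x) by rw [hω]),
      integral_const_mul, integral_sub hYx (integrable_const _), integral_const,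
      probReal_univ, one_smul]
  by_cases hg : g x = 0
  · simp [hfiber, hg]
  · simp [hfiber, ← hc x hg]

end FiniteConditioning

theorem aipw_robust_to_propensities
    {Ω : Type*} [MeasurableSpace Ω] (P : Measure Ω) [IsProbabilityMeasure P]
    {𝕄 𝕎 : Type*} [Fintype 𝕄] [MeasurableSpace 𝕄] [MeasurableSingletonClass 𝕄]
    [Fintype 𝕎] [MeasurableSpace 𝕎] [MeasurableSingletonClass 𝕎]
    (A : Ω → Bool) (M : Ω → 𝕄) (W : Ω → 𝕎)
    (hA : Measurable A) (hM : Measurable M) (hW : Measurable W)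
    (a a' : Bool)
    (Y : Ω → ℝ) (hY_meas : Measurable Y) (hY_bdd : ∃ C : ℝ, ∀ ω, |Y ω| ≤ C)
    (b : 𝕄 → 𝕎 → ℝ)
    (hb : ∀ (m : 𝕄) (w : 𝕎),
      b m w = ∫ ω, Y ω ∂(P[|{ω | A ω = a ∧ M ω = m ∧ W ω = w}]))
    (ξ : 𝕎 → ℝ)
    (hξ : ∀ w : 𝕎,
      ξ w = ∑ m : 𝕄, b m w * ((P[|{ω | A ω = a' ∧ W ω = w}]) {ω | M ω = m}).toReal)
    (ψ : ℝ) (hψ : ψ = ∑ w : 𝕎, (P {ω | W ω = w}).toReal * ξ w)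
    -- estimated nuisance functions, arbitrary propensities with values in (0, 1)
    (πhat₀ πhat₁ : 𝕎 → ℝ)
    (bhat : 𝕄 → 𝕎 → ℝ) (ξhat : 𝕎 → ℝ)
    (rhat : 𝕄 → 𝕎 → ℝ)
    (Ψhat : ℝ)
    (hΨhat : Ψhat = ∫ ω,
        ((if A ω = a then (1 : ℝ) else 0) / πhat₀ (W ω)) * rhat (M ω) (W ω)
            * (Y ω - bhat (M ω) (W ω))
          + ((if A ω = a' then (1 : ℝ) else 0) / πhat₁ (W ω))
            * (bhat (M ω) (W ω) - ξhat (W ω))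
          + ξhat (W ω) ∂P)
    -- correctness of the outcome regression and sequential regression
    (hcorrect_b : ∀ (m : 𝕄) (w : 𝕎), bhat m w = b m w)
    (hcorrect_ξ : ∀ w : 𝕎, ξhat w = ξ w) :
    Ψhat = ψ := by
  obtain ⟨C, hC⟩ := hY_bdd
  have hY : Integrable Y P := Integrable.of_bound hY_meas.aestronglyMeasurable C (ae_of_all _ hC)
  have hAMW : Measurable fun ω => (A ω, M ω, W ω) := hA.prodMk (hM.prodMk hW)
  have hAW : Measurable fun ω => (A ω, W ω) := hA.prodMk hW
  have hbMW : Integrable (fun ω => b (M ω) (W ω)) P :=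
    (Integrable.of_finite (f := fun x : 𝕄 × 𝕎 => b x.1 x.2)).comp_measurable (hM.prodMk hW)
  let weight : Bool × 𝕄 × 𝕎 → ℝ := fun x =>
    (if x.1 = a then 1 else 0) / πhat₀ x.2.2 * rhat x.2.1 x.2.2
  let weight' : Bool × 𝕎 → ℝ := fun x => (if x.1 = a' then 1 else 0) / πhat₁ x.2
  have houtcome : ∫ ω, weight (A ω, M ω, W ω) * (Y ω - b (M ω) (W ω)) ∂P = 0 := by
    refine integral_comp_mul_sub_eq_zero hAMW hY weight (fun x => b x.2.1 x.2.2) ?_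
    rintro ⟨α, m, w⟩ hα
    obtain rfl : α = a := by by_contra h; simp [weight, h] at hα
    simp only [hb, Set.preimage, Set.mem_singleton_iff, Prod.mk.injEq]
  have hsequential : ∫ ω, weight' (A ω, W ω) * (b (M ω) (W ω) - ξ (W ω)) ∂P = 0 := by
    refine integral_comp_mul_sub_eq_zero hAW hbMW weight' (fun x => ξ x.2) ?_
    rintro ⟨α, w⟩ hα
    obtain rfl : α = a' := by by_contra h; simp [weight', h] at hα
    rw [integral_cond_comp_fiber hAW hM (fun m x => b m x.2), hξ]
    simp only [mul_comm, Set.preimage, Set.mem_singleton_iff, Prod.mk.injEq]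
    rfl
  have hξW : Integrable (fun ω => ξ (W ω)) P := Integrable.of_finite.comp_measurable hW
  have h₁ : Integrable (fun ω => weight (A ω, M ω, W ω) * (Y ω - b (M ω) (W ω))) P :=
    (hY.sub hbMW).comp_fintype_mul hAMW weight
  have h₂ : Integrable (fun ω => weight' (A ω, W ω) * (b (M ω) (W ω) - ξ (W ω))) P :=
    (hbMW.sub hξW).comp_fintype_mul hAW weight'
  calc Ψhat = ∫ ω, weight (A ω, M ω, W ω) * (Y ω - b (M ω) (W ω))
        + weight' (A ω, W ω) * (b (M ω) (W ω) - ξ (W ω)) + ξ (W ω) ∂P := by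
        simp only [hΨhat, hcorrect_b, hcorrect_ξ]
        rfl
    _ = ∫ ω, ξ (W ω) ∂P := by
        rw [integral_add ?_ hξW, integral_add h₁ h₂, houtcome, hsequential, zero_add, zero_add]
        exact h₁.add h₂
    _ = ψ := (hψ.trans (integral_comp_eq_sum hW ξ).symm).symm
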